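/- Let n ≥ 3 and let π ∈ S_n be a permutation such that π avoids both the pattern 231 and the pattern 1432 and π² avoids the pattern 231. Then at least one of the following holds: π(1) = n, or π(n) = n, or (π(n−1) = n and π(n) = n−1). -/

import Mathlib

/-- `π` contains the (classical) pattern `σ`: there is a strictly increasing
sequence of positions on which `π` is order isomorphic to `σ`. -/
def ContainsPat {n k : ℕ} (π : Equiv.Perm (Fin n)) (σ : Equiv.Perm (Fin k)) : Prop :=
  ∃ f : Fin k → Fin n, StrictMono f ∧ ∀ a b : Fin k, σ a < σ b ↔ π (f a) < π (f b)

/-- `π` avoids the pattern `σ`. -/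
def AvoidsPat {n k : ℕ} (π : Equiv.Perm (Fin n)) (σ : Equiv.Perm (Fin k)) : Prop :=
  ¬ ContainsPat π σ

/-- `π` contains the consecutive pattern `σ`: some `k` consecutive positions of `π`
carry values order isomorphic to `σ`. -/
def ContainsConsecPat {n k : ℕ} (π : Equiv.Perm (Fin n)) (σ : Equiv.Perm (Fin k)) : Prop :=
  ∃ (i : ℕ) (h : i + k ≤ n), ∀ a b : Fin k,
    σ a < σ b ↔ π ⟨i + a.val, by have := a.isLt; omega⟩ < π ⟨i + b.val, by have := b.isLt; omega⟩

/-- `π` avoids the consecutive pattern `σ`. -/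
def AvoidsConsecPat {n k : ℕ} (π : Equiv.Perm (Fin n)) (σ : Equiv.Perm (Fin k)) : Prop :=
  ¬ ContainsConsecPat π σ

/-- the pattern 231 (0-indexed: 0 ↦ 1, 1 ↦ 2, 2 ↦ 0) -/
def p231 : Equiv.Perm (Fin 3) := c[0, 1, 2]

/-- the pattern 312 (0-indexed: 0 ↦ 2, 1 ↦ 0, 2 ↦ 1) -/
def p312 : Equiv.Perm (Fin 3) := c[0, 2, 1]

/-- the pattern 213 (0-indexed: 0 ↦ 1, 1 ↦ 0, 2 ↦ 2) -/
def p213 : Equiv.Perm (Fin 3) := c[0, 1]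

/-- the pattern 1432 (0-indexed: 0 ↦ 0, 1 ↦ 3, 2 ↦ 2, 3 ↦ 1) -/
def p1432 : Equiv.Perm (Fin 4) := c[1, 3]

/-- direct sum of two permutations -/
def dsum {k m : ℕ} (σ : Equiv.Perm (Fin k)) (τ : Equiv.Perm (Fin m)) :
    Equiv.Perm (Fin (k + m)) :=
  finSumFinEquiv.symm.trans ((Equiv.sumCongr σ τ).trans finSumFinEquiv)

/-- the Lucas numbers: L₁ = 1, L₂ = 3, L_m = L_{m-1} + L_{m-2} -/
def lucas : ℕ → ℕ
  | 0 => 2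
  | 1 => 1
  | n + 2 => lucas (n + 1) + lucas n

/-! Let `j` be the position of the maximum `n`, and suppose `1 < j < n`. Avoiding 231 puts every
value left of `j` below every value right of `j`; avoiding 1432, with `π(1)` in front of the
maximum, makes the values right of `j` increase. Hence `π(c) = c - 1` for all `c > j`. Unless
`j = n - 1`, the values of `π²` at the positions `j < j + 1 < n` are then `n - 1, n, n - 2`,
an occurrence of 231. -/

open Equiv Finset

theorem containsPat_of_strictMono {n k : ℕ} {π : Perm (Fin n)} {σ : Perm (Fin k)}
    (f : Fin k → Fin n) (hf : StrictMono f) (hπf : StrictMono (π ∘ f ∘ σ.symm)) :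
    ContainsPat π σ :=
  ⟨f, hf, fun a b => by simpa using (hπf.lt_iff_lt (a := σ a) (b := σ b)).symm⟩

section
variable {n : ℕ} {π : Perm (Fin n)} {a b c d j : Fin n}

theorem containsPat_p231 (hab : a < b) (hbc : b < c) (hπca : π c < π a) (hπab : π a < π b) :
    ContainsPat π p231 := by
  refine containsPat_of_strictMono ![a, b, c] ?_ ?_
  · simp [Fin.strictMono_iff_lt_succ, Fin.forall_fin_two, hab, hbc]
  · have : π ∘ ![a, b, c] ∘ p231.symm = ![π c, π a, π b] := by
      funext x; fin_cases x <;> rfl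
    simp [this, Fin.strictMono_iff_lt_succ, Fin.forall_fin_two, hπca, hπab]

theorem containsPat_p1432 (hab : a < b) (hbc : b < c) (hcd : c < d) (hπad : π a < π d)
    (hπdc : π d < π c) (hπcb : π c < π b) : ContainsPat π p1432 := by
  refine containsPat_of_strictMono ![a, b, c, d] ?_ ?_
  · simp [Fin.strictMono_iff_lt_succ, Fin.forall_fin_succ, hab, hbc, hcd]
  · have : π ∘ ![a, b, c, d] ∘ p1432.symm = ![π a, π d, π c, π b] := by
      funext x; fin_cases x <;> rfl
    simp [this, Fin.strictMono_iff_lt_succ, Fin.forall_fin_succ, hπad, hπdc, hπcb]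

theorem card_filter_apply_lt (π : Perm (Fin n)) (x : Fin n) :
    #{a | π a < x} = x.val := by
  rw [← Fin.card_Iio x, ← card_map π.toEmbedding]
  congr 1; ext a; simp [mem_map_equiv]

theorem apply_lt_apply_of_forall_le (hmax : ∀ x, π x ≤ π j) {x : Fin n} (hx : x ≠ j) :
    π x < π j :=
  (hmax x).lt_of_ne (π.injective.ne hx)

variable (h231 : AvoidsPat π p231) (hmax : ∀ x, π x ≤ π j)
include h231 hmax

theorem apply_lt_apply_across_max (haj : a < j) (hjc : j < c) : π a < π c := by
  by_contra! hca
  have hca : π c < π a := hca.lt_of_ne (π.injective.ne (haj.trans hjc).ne')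
  exact h231 (containsPat_p231 haj hjc hca (apply_lt_apply_of_forall_le hmax haj.ne))

variable (h1432 : AvoidsPat π p1432)
include h1432

theorem apply_lt_apply_after_max (haj : a < j) (hjc : j < c) (hcd : c < d) : π c < π d := by
  by_contra! hdc
  have hdc : π d < π c := hdc.lt_of_ne (π.injective.ne hcd.ne')
  have had : π a < π d := apply_lt_apply_across_max h231 hmax haj (hjc.trans hcd)
  exact h1432 (containsPat_p1432 haj hjc hcd had hdc (apply_lt_apply_of_forall_le hmax hjc.ne'))

theorem val_apply_after_max (haj : a < j) (hjc : j < c) : (π c).val = c.val - 1 := by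
  have hbelow : ({x | π x < π c} : Finset (Fin n)) = (Iio c).erase j := by
    ext x
    simp only [mem_filter, mem_univ, true_and, mem_erase, mem_Iio]
    constructor
    · intro hx
      refine ⟨fun hxj => (hmax c).not_gt (hxj ▸ hx), ?_⟩
      by_contra! hcx
      rcases hcx.eq_or_lt with rfl | hcx
      · exact lt_irrefl _ hx
      · exact (apply_lt_apply_after_max h231 hmax h1432 haj hjc hcx).not_gt hx
    · rintro ⟨hxj, hxc⟩
      rcases lt_or_gt_of_ne hxj with hxj | hxj
      · exact apply_lt_apply_across_max h231 hmax hxj hjc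
      · exact apply_lt_apply_after_max h231 hmax h1432 haj hxj hxc
  rw [← card_filter_apply_lt π (π c), hbelow, card_erase_of_mem (mem_Iio.2 hjc), Fin.card_Iio]

end

theorem containsPat_sq_p231 {n : ℕ} {π : Perm (Fin n)} {j : Fin n} (hj : (π j).val = n - 1)
    (hshift : ∀ c, j < c → (π c).val = c.val - 1) (hjn : j.val + 3 ≤ n) :
    ContainsPat (π ^ 2) p231 := by
  have hshift' : ∀ (m : ℕ) (hm : m < n), j.val < m → (π ⟨m, hm⟩).val = m - 1 :=
    fun m hm hjm => hshift ⟨m, hm⟩ hjm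
  have hπj : π j = ⟨n - 1, by omega⟩ := Fin.ext hj
  have hπlast : π ⟨n - 1, by omega⟩ = ⟨n - 2, by omega⟩ :=
    Fin.ext (hshift' _ _ (by omega))
  have hπnext : π ⟨j + 1, by omega⟩ = j :=
    Fin.ext (by simp [hshift' (j + 1) (by omega) (by omega)])
  have hπpen := hshift' (n - 2) (by omega) (by omega)
  refine containsPat_p231 (a := j) (b := ⟨j + 1, by omega⟩) (c := ⟨n - 1, by omega⟩)
    (Fin.lt_def.2 (by simp)) (Fin.lt_def.2 (by simp; omega)) ?_ ?_ <;>
  simp only [sq, Perm.mul_apply, hπj, hπlast, hπnext, Fin.lt_def] <;> omega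

theorem stmt2 (n : ℕ) (hn : 3 ≤ n) (π : Equiv.Perm (Fin n))
    (h1 : AvoidsPat π p231) (h2 : AvoidsPat π p1432) (h3 : AvoidsPat (π ^ 2) p231) :
    π ⟨0, by omega⟩ = ⟨n - 1, by omega⟩ ∨
    π ⟨n - 1, by omega⟩ = ⟨n - 1, by omega⟩ ∨
    (π ⟨n - 2, by omega⟩ = ⟨n - 1, by omega⟩ ∧ π ⟨n - 1, by omega⟩ = ⟨n - 2, by omega⟩) := by
  obtain ⟨j, hj⟩ := π.surjective ⟨n - 1, by omega⟩
  have hmax : ∀ x, π x ≤ π j := fun x => by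
    rw [Fin.le_def, hj]; exact Nat.le_sub_one_of_lt (π x).isLt
  by_cases hfirst : j.val = 0
  · rw [(Fin.ext hfirst : j = ⟨0, by omega⟩)] at hj
    exact Or.inl hj
  by_cases hlast : j.val = n - 1
  · rw [(Fin.ext hlast : j = ⟨n - 1, by omega⟩)] at hj
    exact Or.inr (Or.inl hj)
  have hshift : ∀ c, j < c → (π c).val = c.val - 1 := fun c =>
    val_apply_after_max h1 hmax h2 (a := ⟨0, by omega⟩) (Fin.lt_def.2 (by simp; omega))
  by_cases hpen : j.val = n - 2
  · rw [(Fin.ext hpen : j = ⟨n - 2, by omega⟩)] at hj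
    refine Or.inr (Or.inr ⟨hj, Fin.ext ?_⟩)
    rw [hshift ⟨n - 1, by omega⟩ (Fin.lt_def.2 (by simp; omega))]
    dsimp only
    omega
  · exact absurd (containsPat_sq_p231 (congrArg Fin.val hj) hshift (by omega)) h3
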